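/- arXiv:1810.08349 — 2 statements merged into one kernel-verified Lean document; each statement's English description precedes it below -/
import Mathlib

section
/- Let (X,Σ_X,μ) and (Y,Σ_Y,ν) be finite positive measure spaces, let Φ : M^∞_μ → M^∞_ν be a Markov transfunction with Φμ = ν, and let Φ^† : M^∞_ν → M^∞_μ be the unique linear total-variation-continuous map with Φ^†(1_B ν)(A) = Φ(1_A μ)(B) for all measurable A ⊆ X, B ⊆ Y. Then Φ^† is a Markov transfunction: it is linear and total-variation continuous, Φ^†ρ ≥ 0 whenever ρ ≥ 0, and (Φ^†ρ)(X) = ρ(Y) for all ρ ∈ M^∞_ν. -/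
open MeasureTheory Filter Topology

/-- total variation norm of a finite signed measure -/
noncomputable def tv {Z : Type*} [MeasurableSpace Z] (s : SignedMeasure Z) : ℝ :=
  (SignedMeasure.totalVariation s Set.univ).toReal

/-- `M^∞_μ := {fμ : f ∈ L^∞(X,μ)}` -/
def Minf {Z : Type*} [MeasurableSpace Z] (μ : Measure Z) : Set (SignedMeasure Z) :=
  {s | ∃ f : Z → ℝ, MemLp f ⊤ μ ∧ μ.withDensityᵥ f = s}

/-- a transfunction `M^∞_μ → M^∞_ν` is linear and continuous (bounded) w.r.t. total variation -/
def LinTV {X Y : Type*} [MeasurableSpace X] [MeasurableSpace Y]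
    {μ : Measure X} {ν : Measure Y} (Φ : Minf μ → Minf ν) : Prop :=
  (∀ a b c : Minf μ, c.1 = a.1 + b.1 → (Φ c).1 = (Φ a).1 + (Φ b).1) ∧
  (∀ (r : ℝ) (a c : Minf μ), c.1 = r • a.1 → (Φ c).1 = r • (Φ a).1) ∧
  (∃ C : ℝ, ∀ a : Minf μ, tv (Φ a).1 ≤ C * tv a.1)

/-- the duality relation `Ψ(1_B ν)(A) = Φ(1_A μ)(B)` for all measurable `A ⊆ X`, `B ⊆ Y` -/
def DualEq {X Y : Type*} [MeasurableSpace X] [MeasurableSpace Y]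
    (μ : Measure X) (ν : Measure Y) (Φ : Minf μ → Minf ν) (Ψ : Minf ν → Minf μ) : Prop :=
  ∀ (A : Set X) (B : Set Y), MeasurableSet A → MeasurableSet B →
    ∀ (a : Minf μ) (b : Minf ν),
      a.1 = μ.withDensityᵥ (A.indicator fun _ => (1 : ℝ)) →
      b.1 = ν.withDensityᵥ (B.indicator fun _ => (1 : ℝ)) →
      (Ψ b).1 A = (Φ a).1 B

/-!
On the densities `1_B ν` both properties of `Ψ` are read off the duality:
`Ψ(1_B ν)(A) = Φ(1_A μ)(B) ≥ 0` and `Ψ(1_B ν)(X) = (Φμ)(B) = ν(B)`. By linearity,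
`Ψ(tν)(A) = ∫ t d(Φ(1_A μ))` for every simple function `t`, so both properties hold on simple
densities. Simple functions are dense in `L¹(ν)`, nonnegative ones among nonnegative densities,
and `‖fν‖_TV ≤ ‖f‖_{L¹}`, so total-variation continuity of `Ψ` carries both properties over to
all of `M^∞_ν`.
-/

open scoped ENNReal

section

variable {Z : Type*} [MeasurableSpace Z]

lemma tv_nonneg (s : SignedMeasure Z) : 0 ≤ tv s := ENNReal.toReal_nonneg

lemma abs_apply_le_tv (s : SignedMeasure Z) (A : Set Z) : |s A| ≤ tv s :=
  calc |s A| ≤ s.totalVariation.real A := s.norm_le_totalVariation A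
    _ ≤ s.totalVariation.real Set.univ := measureReal_mono (Set.subset_univ A)

lemma tv_withDensityᵥ_le (ξ : Measure Z) {h : Z → ℝ} (hh : Integrable h ξ) :
    tv (ξ.withDensityᵥ h) ≤ (eLpNorm h 1 ξ).toReal := by
  have hvar : SignedMeasure.totalVariation (ξ.withDensityᵥ h) ≤ ξ.withDensity (‖h ·‖ₑ) := by
    rw [SignedMeasure.totalVariation_eq_variation]
    refine VectorMeasure.variation_le_of_forall_enorm_le fun E hE => ?_
    rw [withDensityᵥ_apply hh hE, withDensity_apply _ hE]
    exact enorm_integral_le_lintegral_enorm h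
  have hfin : eLpNorm h 1 ξ ≠ ∞ := (memLp_one_iff_integrable.mpr hh).eLpNorm_ne_top
  refine ENNReal.toReal_mono hfin ((hvar Set.univ).trans_eq ?_)
  rw [withDensity_apply _ MeasurableSet.univ, Measure.restrict_univ, eLpNorm_one_eq_lintegral_enorm]

lemma MeasureTheory.MemLp.exists_nonneg_simpleFunc_eLpNorm_sub_lt {p : ℝ≥0∞} {ξ : Measure Z}
    {f : Z → ℝ} (hf : MemLp f p ξ) (hp : p ≠ ∞) (hf0 : 0 ≤ᵐ[ξ] f) {ε : ℝ≥0∞} (hε : ε ≠ 0) :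
    ∃ t : SimpleFunc Z ℝ, eLpNorm (f - ⇑t) p ξ < ε ∧ ∀ z, 0 ≤ t z := by
  obtain ⟨t, ht, -⟩ := hf.exists_simpleFunc_eLpNorm_sub_lt hp hε
  refine ⟨t.map (max · 0), lt_of_le_of_lt (eLpNorm_mono_ae ?_) ht, fun z => le_max_right _ _⟩
  filter_upwards [hf0] with z hz
  have hclip := abs_max_sub_max_le_abs (f z) (t z) 0
  rw [max_eq_left (show (0 : ℝ) ≤ f z from hz)] at hclip
  simpa using hclip

lemma ae_nonneg_of_withDensityᵥ_nonneg {ξ : Measure Z} {f : Z → ℝ} (hf : Integrable f ξ)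
    (h : 0 ≤ ξ.withDensityᵥ f) : 0 ≤ᵐ[ξ] f :=
  ae_nonneg_of_forall_setIntegral_nonneg hf fun s hs _ => by
    simpa [withDensityᵥ_apply hf hs] using VectorMeasure.le_iff.mp h s hs

noncomputable def Minf.indicatorOne (ξ : Measure Z) [IsFiniteMeasure ξ] {s : Set Z}
    (hs : MeasurableSet s) : Minf ξ :=
  ⟨_, _, memLp_indicator_const ⊤ hs (1 : ℝ) (Or.inr (measure_ne_top ξ s)), rfl⟩

lemma withDensityᵥ_indicator_one_nonneg (ξ : Measure Z) [IsFiniteMeasure ξ] {s : Set Z}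
    (hs : MeasurableSet s) : 0 ≤ ξ.withDensityᵥ (s.indicator fun _ => (1 : ℝ)) :=
  VectorMeasure.le_iff.mpr fun i hi => by
    rw [zero_apply, withDensityᵥ_apply ((integrable_const 1).indicator hs) hi]
    exact setIntegral_nonneg hi fun z _ => Set.indicator_nonneg (fun _ _ => zero_le_one) z

lemma withDensityᵥ_indicator_univ_one (ξ : Measure Z) [IsFiniteMeasure ξ] :
    ξ.withDensityᵥ (Set.univ.indicator fun _ => (1 : ℝ)) = ξ.toSignedMeasure := by
  ext s hs
  rw [Set.indicator_univ, withDensityᵥ_apply (integrable_const 1) hs,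
    Measure.toSignedMeasure_apply_measurable hs, setIntegral_const, smul_eq_mul, mul_one]

lemma MeasureTheory.SignedMeasure.exists_toSignedMeasure_eq_of_nonneg {s : SignedMeasure Z}
    (hs : 0 ≤ s) : ∃ (m : Measure Z) (_ : IsFiniteMeasure m), m.toSignedMeasure = s := by
  have hs' : 0 ≤[Set.univ] s := by simpa [VectorMeasure.restrict_univ]
  exact ⟨_, inferInstance, s.toMeasureOfZeroLE_toSignedMeasure hs'⟩

end

section

variable {X Y : Type*} [MeasurableSpace X] [MeasurableSpace Y] {μ : Measure X} {ν : Measure Y}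

lemma Minf.exists_simpleFunc_tv_sub_lt [IsFiniteMeasure ν] (b : Minf ν) {ε : ℝ} (hε : 0 < ε) :
    ∃ (t : SimpleFunc Y ℝ) (d : Minf ν),
      (0 ≤ b.1 → ∀ y, 0 ≤ t y) ∧ b.1 = ν.withDensityᵥ t + d.1 ∧ tv d.1 < ε := by
  obtain ⟨_, f, hf, rfl⟩ := b
  have hf1 : MemLp f 1 ν := hf.mono_exponent le_top
  have hfi : Integrable f ν := memLp_one_iff_integrable.mp hf1
  have hε' : ENNReal.ofReal ε ≠ 0 := (ENNReal.ofReal_pos.mpr hε).ne'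
  obtain ⟨t, ht, hnn⟩ : ∃ t : SimpleFunc Y ℝ, eLpNorm (f - ⇑t) 1 ν < ENNReal.ofReal ε ∧
      (0 ≤ ν.withDensityᵥ f → ∀ y, 0 ≤ t y) := by
    by_cases hb : 0 ≤ ν.withDensityᵥ f
    · obtain ⟨t, ht, hnn⟩ := hf1.exists_nonneg_simpleFunc_eLpNorm_sub_lt ENNReal.one_ne_top
        (ae_nonneg_of_withDensityᵥ_nonneg hfi hb) hε'
      exact ⟨t, ht, fun _ => hnn⟩
    · obtain ⟨t, ht, -⟩ := hf1.exists_simpleFunc_eLpNorm_sub_lt ENNReal.one_ne_top hε'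
      exact ⟨t, ht, fun h => absurd h hb⟩
  have hti : Integrable t ν := t.integrable_of_isFiniteMeasure
  refine ⟨t, ⟨_, f - t, hf.sub (t.memLp_top ν), rfl⟩, hnn, ?_, ?_⟩
  · rw [← withDensityᵥ_add hti (hfi.sub hti), add_sub_cancel]
  · exact (tv_withDensityᵥ_le ν (hfi.sub hti)).trans_lt
      (ENNReal.toReal_lt_of_lt_ofReal ht)

lemma LinTV.exists_simpleFunc_approx [IsFiniteMeasure ν] {Ψ : Minf ν → Minf μ} (hΨ : LinTV Ψ)
    (b : Minf ν) {ε : ℝ} (hε : 0 < ε) :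
    ∃ (t : SimpleFunc Y ℝ) (bt : Minf ν), bt.1 = ν.withDensityᵥ t ∧ (0 ≤ b.1 → ∀ y, 0 ≤ t y) ∧
      (∀ A, |(Ψ b).1 A - (Ψ bt).1 A| ≤ ε) ∧ ∀ B, |b.1 B - bt.1 B| ≤ ε := by
  obtain ⟨C, hC⟩ := hΨ.2.2
  have hCpos : 0 < max C 0 + 1 := by positivity
  obtain ⟨t, d, hnn, hbd, hd⟩ := Minf.exists_simpleFunc_tv_sub_lt b (div_pos hε hCpos)
  let bt : Minf ν := ⟨_, t, t.memLp_top ν, rfl⟩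
  have hΨbd : (Ψ b).1 = (Ψ bt).1 + (Ψ d).1 := hΨ.1 bt d b hbd
  have hΨd : tv (Ψ d).1 ≤ ε :=
    calc tv (Ψ d).1 ≤ max C 0 * tv d.1 :=
          (hC d).trans (mul_le_mul_of_nonneg_right (le_max_left C 0) (tv_nonneg _))
      _ ≤ (max C 0 + 1) * (ε / (max C 0 + 1)) := by gcongr <;> linarith [tv_nonneg d.1]
      _ = ε := mul_div_cancel₀ ε hCpos.ne'
  have hdε : tv d.1 ≤ ε :=
    hd.le.trans (div_le_self hε.le (by linarith [le_max_right C 0]))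
  refine ⟨t, bt, rfl, hnn, fun A => ?_, fun B => ?_⟩
  · rw [hΨbd, add_apply, add_sub_cancel_left]
    exact (abs_apply_le_tv _ A).trans hΨd
  · rw [hbd, add_apply, add_sub_cancel_left]
    exact (abs_apply_le_tv _ B).trans hdε

end

section

variable {X Y : Type*} [MeasurableSpace X] [MeasurableSpace Y] {μ : Measure X} {ν : Measure Y}
  [IsFiniteMeasure ν]

lemma LinTV.apply_withDensityᵥ_simpleFunc {Ψ : Minf ν → Minf μ} (hΨ : LinTV Ψ) {A : Set X}
    {m : Measure Y} [IsFiniteMeasure m]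
    (hm : ∀ B, MeasurableSet B → ∀ b : Minf ν,
      b.1 = ν.withDensityᵥ (B.indicator fun _ => (1 : ℝ)) → (Ψ b).1 A = m.real B)
    (t : SimpleFunc Y ℝ) (b : Minf ν) (hb : b.1 = ν.withDensityᵥ t) :
    (Ψ b).1 A = ∫ y, t y ∂m := by
  induction t using SimpleFunc.induction generalizing b with
  | @const c B hB =>
    let b₁ := Minf.indicatorOne ν hB
    have hcoe : ⇑(SimpleFunc.piecewise B hB (SimpleFunc.const Y c) (SimpleFunc.const Y 0)) =
        B.indicator fun _ => c := by
      ext y; by_cases hy : y ∈ B <;> simp [hy]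
    have hcB : (B.indicator fun _ => c) = c • B.indicator fun _ => (1 : ℝ) := by
      ext y; by_cases hy : y ∈ B <;> simp [hy]
    have hb₁ : b.1 = c • b₁.1 := by rw [hb, hcoe, hcB, withDensityᵥ_smul]; rfl
    rw [hΨ.2.1 c b₁ b hb₁, smul_apply, hm B hB b₁ rfl, hcoe,
      integral_indicator_const c hB, smul_eq_mul, smul_eq_mul, mul_comm]
  | @add f g _ hf hg =>
    have hfi : Integrable f ν := f.integrable_of_isFiniteMeasure
    have hgi : Integrable g ν := g.integrable_of_isFiniteMeasure
    let bf : Minf ν := ⟨_, f, f.memLp_top ν, rfl⟩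
    let bg : Minf ν := ⟨_, g, g.memLp_top ν, rfl⟩
    have hbfg : b.1 = bf.1 + bg.1 := by rw [hb, SimpleFunc.coe_add, withDensityᵥ_add hfi hgi]
    rw [hΨ.1 bf bg b hbfg, add_apply, hf bf rfl, hg bg rfl, ← integral_add'
      f.integrable_of_isFiniteMeasure g.integrable_of_isFiniteMeasure, SimpleFunc.coe_add]

variable [IsFiniteMeasure μ] {Φ : Minf μ → Minf ν} {Ψ : Minf ν → Minf μ}

lemma DualEq.apply_withDensityᵥ_simpleFunc_nonneg (hdual : DualEq μ ν Φ Ψ)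
    (hΦpos : ∀ a : Minf μ, 0 ≤ a.1 → 0 ≤ (Φ a).1) (hΨ : LinTV Ψ) {A : Set X}
    (hA : MeasurableSet A) (t : SimpleFunc Y ℝ) (ht : ∀ y, 0 ≤ t y) (b : Minf ν)
    (hb : b.1 = ν.withDensityᵥ t) : 0 ≤ (Ψ b).1 A := by
  let a := Minf.indicatorOne μ hA
  obtain ⟨m, _, hm⟩ := SignedMeasure.exists_toSignedMeasure_eq_of_nonneg
    (hΦpos a (withDensityᵥ_indicator_one_nonneg μ hA))
  have hΨm : ∀ B, MeasurableSet B → ∀ b : Minf ν,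
      b.1 = ν.withDensityᵥ (B.indicator fun _ => (1 : ℝ)) → (Ψ b).1 A = m.real B :=
    fun B hB b hb => by
      rw [hdual A B hA hB a b rfl hb, ← hm, m.toSignedMeasure_apply_measurable hB]
  rw [hΨ.apply_withDensityᵥ_simpleFunc hΨm t b hb]
  exact integral_nonneg ht

lemma DualEq.apply_univ_withDensityᵥ_simpleFunc (hdual : DualEq μ ν Φ Ψ)
    (hΦμ : ∀ a : Minf μ, a.1 = μ.toSignedMeasure → (Φ a).1 = ν.toSignedMeasure) (hΨ : LinTV Ψ)
    (t : SimpleFunc Y ℝ) (b : Minf ν) (hb : b.1 = ν.withDensityᵥ t) :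
    (Ψ b).1 Set.univ = b.1 Set.univ := by
  let a := Minf.indicatorOne μ MeasurableSet.univ
  have hΨν : ∀ B, MeasurableSet B → ∀ b : Minf ν,
      b.1 = ν.withDensityᵥ (B.indicator fun _ => (1 : ℝ)) → (Ψ b).1 Set.univ = ν.real B :=
    fun B hB b hb => by
      rw [hdual _ B MeasurableSet.univ hB a b rfl hb,
        hΦμ a (withDensityᵥ_indicator_univ_one μ), ν.toSignedMeasure_apply_measurable hB]
  rw [hΨ.apply_withDensityᵥ_simpleFunc hΨν t b hb, hb,
    withDensityᵥ_apply t.integrable_of_isFiniteMeasure MeasurableSet.univ, setIntegral_univ]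

end

theorem stmt10_general {X Y : Type*} [MeasurableSpace X] [MeasurableSpace Y]
    (μ : Measure X) (ν : Measure Y) [IsFiniteMeasure μ] [IsFiniteMeasure ν]
    (Φ : Minf μ → Minf ν)
    (hΦpos : ∀ a : Minf μ, 0 ≤ a.1 → 0 ≤ (Φ a).1)
    (hΦμ : ∀ a : Minf μ, a.1 = μ.toSignedMeasure → (Φ a).1 = ν.toSignedMeasure)
    (Ψ : Minf ν → Minf μ) (hΨlin : LinTV Ψ) (hdual : DualEq μ ν Φ Ψ) :
    -- Ψ is positive
    (∀ b : Minf ν, 0 ≤ b.1 → 0 ≤ (Ψ b).1) ∧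
    -- Ψ is measure-preserving: (Ψρ)(X) = ρ(Y)
    (∀ b : Minf ν, (Ψ b).1 Set.univ = b.1 Set.univ) := by
  refine ⟨fun b hb => VectorMeasure.le_iff.mpr fun A hA => ?_, fun b => ?_⟩
  · rw [zero_apply]
    refine le_of_forall_pos_le_add fun ε hε => ?_
    obtain ⟨t, bt, hbt, ht, hΨbt, -⟩ := hΨlin.exists_simpleFunc_approx b hε
    have hΨbt_nonneg := hdual.apply_withDensityᵥ_simpleFunc_nonneg hΦpos hΨlin hA t (ht hb) bt hbt
    linarith [(abs_le.mp (hΨbt A)).1]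
  · refine eq_of_forall_dist_le fun ε hε => ?_
    obtain ⟨t, bt, hbt, -, hΨbt, hbbt⟩ := hΨlin.exists_simpleFunc_approx b (half_pos hε)
    have hΨbt_univ := hdual.apply_univ_withDensityᵥ_simpleFunc hΦμ hΨlin t bt hbt
    rw [Real.dist_eq, abs_le]
    constructor <;> linarith [abs_le.mp (hΨbt Set.univ), abs_le.mp (hbbt Set.univ)]

/-- If `Φ : M^∞_μ → M^∞_ν` is a Markov transfunction with `Φμ = ν` and
`Ψ = Φ^†` is its dagger (linear, total-variation continuous, and satisfying
`Ψ(1_B ν)(A) = Φ(1_A μ)(B)`), then `Ψ` is a Markov transfunction: it is positive and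
measure-preserving (it is linear and total-variation continuous by assumption). -/
theorem stmt10 {X Y : Type*} [MeasurableSpace X] [MeasurableSpace Y]
    (μ : Measure X) (ν : Measure Y) [IsFiniteMeasure μ] [IsFiniteMeasure ν]
    (Φ : Minf μ → Minf ν) (hΦlin : LinTV Φ)
    (hΦpos : ∀ a : Minf μ, 0 ≤ a.1 → 0 ≤ (Φ a).1)
    (hΦpres : ∀ a : Minf μ, (Φ a).1 Set.univ = a.1 Set.univ)
    (hΦμ : ∀ a : Minf μ, a.1 = μ.toSignedMeasure → (Φ a).1 = ν.toSignedMeasure)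
    (Ψ : Minf ν → Minf μ) (hΨlin : LinTV Ψ) (hdual : DualEq μ ν Φ Ψ) :
    -- Ψ is positive
    (∀ b : Minf ν, 0 ≤ b.1 → 0 ≤ (Ψ b).1) ∧
    -- Ψ is measure-preserving: (Ψρ)(X) = ρ(Y)
    (∀ b : Minf ν, (Ψ b).1 Set.univ = b.1 Set.univ) :=
  stmt10_general μ ν Φ hΦpos hΦμ Ψ hΨlin hdual
end

section
/- Let X and Y be locally compact Polish spaces and let Φ be a map from finite signed Borel measures on X to finite signed Borel measures on Y that is linear and weakly continuous (λ_n → λ weakly implies Φλ_n → Φλ weakly). Then there exists a sequence (Φ_n) of simple transfunctions — each of the form Φ_n λ = Σ_{i=1}^{m_n} (∫_X f_{n,i} dλ) ρ_{n,i} with f_{n,i} ∈ C_b(X) and ρ_{n,i} finite signed Borel measures on Y — such that for every finite signed Borel measure λ on X, Φ_n λ converges weakly to Φλ, i.e. ∫_Y g d(Φ_n λ) → ∫_Y g d(Φλ) for every g ∈ C_b(Y). -/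
/-!
Discretize: for each `n` take a finite partition of unity `(χ_{n,i})_i` on the `n`-th set of a
compact exhaustion of `X`, subordinate to balls of radius `1/(n+1)` around points `p_{n,i}`,
and put `λ_n = ∑_i (∫ χ_{n,i} dλ) δ_{p_{n,i}}`. For `F ∈ C_b(X)` we have
`∫ F dλ_n = ∫ ∑_i F(p_{n,i}) χ_{n,i} dλ`; the integrand is bounded by `‖F‖` and tends to `F`
pointwise by continuity of `F`, so `λ_n → λ` weakly by dominated convergence. By weak continuity
and linearity, `Φ λ = lim Φ λ_n = lim ∑_i (∫ χ_{n,i} dλ) Φ δ_{p_{n,i}}`.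
-/

open MeasureTheory Filter Topology

/-- integral of a function against a finite signed measure (via the Jordan decomposition) -/
noncomputable def sint {Z : Type*} [MeasurableSpace Z] (s : SignedMeasure Z) (f : Z → ℝ) : ℝ :=
  ∫ z, f z ∂s.toJordanDecomposition.posPart - ∫ z, f z ∂s.toJordanDecomposition.negPart

open Metric BoundedContinuousFunction

theorem toSignedMeasure_posPart_sub_negPart {Z : Type*} [MeasurableSpace Z] (s : SignedMeasure Z) :
    s.toJordanDecomposition.posPart.toSignedMeasure -
      s.toJordanDecomposition.negPart.toSignedMeasure = s :=
  s.toSignedMeasure_toJordanDecomposition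

section sint

variable {Z : Type*} [MeasurableSpace Z] [TopologicalSpace Z] [OpensMeasurableSpace Z]

theorem sint_toSignedMeasure_sub (μ ν : Measure Z) [IsFiniteMeasure μ] [IsFiniteMeasure ν]
    (f : Z →ᵇ ℝ) :
    sint (μ.toSignedMeasure - ν.toSignedMeasure) f = ∫ z, f z ∂μ - ∫ z, f z ∂ν := by
  set s := μ.toSignedMeasure - ν.toSignedMeasure
  set p := s.toJordanDecomposition.posPart
  set q := s.toJordanDecomposition.negPart
  have hmeasure : p + ν = μ + q := by
    rw [← Measure.toSignedMeasure_eq_toSignedMeasure_iff, Measure.toSignedMeasure_add,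
      Measure.toSignedMeasure_add, ← sub_eq_sub_iff_add_eq_add]
    exact toSignedMeasure_posPart_sub_negPart s
  have hintegral : ∫ z, f z ∂p + ∫ z, f z ∂ν = ∫ z, f z ∂μ + ∫ z, f z ∂q := by
    rw [← integral_add_measure (f.integrable _) (f.integrable _),
      ← integral_add_measure (f.integrable _) (f.integrable _), hmeasure]
  rw [sint]
  linarith

theorem sint_toSignedMeasure (μ : Measure Z) [IsFiniteMeasure μ] (f : Z →ᵇ ℝ) :
    sint μ.toSignedMeasure f = ∫ z, f z ∂μ := by
  simpa using sint_toSignedMeasure_sub μ 0 f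

theorem sint_add (s t : SignedMeasure Z) (f : Z →ᵇ ℝ) :
    sint (s + t) f = sint s f + sint t f := by
  have h : s + t =
      (s.toJordanDecomposition.posPart + t.toJordanDecomposition.posPart).toSignedMeasure -
        (s.toJordanDecomposition.negPart + t.toJordanDecomposition.negPart).toSignedMeasure := by
    rw [Measure.toSignedMeasure_add, Measure.toSignedMeasure_add]
    conv_lhs =>
      rw [← toSignedMeasure_posPart_sub_negPart s, ← toSignedMeasure_posPart_sub_negPart t]
    abel
  rw [h, sint_toSignedMeasure_sub, integral_add_measure (f.integrable _) (f.integrable _),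
    integral_add_measure (f.integrable _) (f.integrable _), sint, sint]
  ring

theorem sint_neg (s : SignedMeasure Z) (f : Z →ᵇ ℝ) : sint (-s) f = -sint s f := by
  rw [← toSignedMeasure_posPart_sub_negPart s, neg_sub, sint_toSignedMeasure_sub,
    toSignedMeasure_posPart_sub_negPart, sint]
  ring

theorem sint_smul_of_nonneg {r : ℝ} (hr : 0 ≤ r) (s : SignedMeasure Z) (f : Z →ᵇ ℝ) :
    sint (r • s) f = r * sint s f := by
  set p := s.toJordanDecomposition.posPart
  set q := s.toJordanDecomposition.negPart
  have h : r • s = (r.toNNReal • p).toSignedMeasure - (r.toNNReal • q).toSignedMeasure := by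
    rw [Measure.toSignedMeasure_smul, Measure.toSignedMeasure_smul, NNReal.smul_def,
      NNReal.smul_def, Real.coe_toNNReal _ hr]
    conv_lhs => rw [← toSignedMeasure_posPart_sub_negPart s]
    ext A hA
    simp only [_root_.smul_apply, _root_.sub_apply, smul_eq_mul]
    ring
  rw [h, sint_toSignedMeasure_sub, integral_smul_nnreal_measure, integral_smul_nnreal_measure,
    NNReal.smul_def, NNReal.smul_def, Real.coe_toNNReal _ hr, sint, smul_eq_mul, smul_eq_mul]
  ring

theorem sint_smul (r : ℝ) (s : SignedMeasure Z) (f : Z →ᵇ ℝ) :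
    sint (r • s) f = r * sint s f := by
  rcases le_total 0 r with hr | hr
  · exact sint_smul_of_nonneg hr s f
  · have h : r • s = (-r) • -s := by
      ext A hA
      simp only [_root_.smul_apply, _root_.neg_apply, smul_eq_mul]
      ring
    rw [h, sint_smul_of_nonneg (neg_nonneg.2 hr), sint_neg]
    ring

theorem sint_sum_smul_dirac {ι : Type*} [Fintype ι] (c : ι → ℝ) (p : ι → Z) (f : Z →ᵇ ℝ) :
    sint (∑ i, c i • (Measure.dirac (p i)).toSignedMeasure) f = ∑ i, c i * f (p i) := by
  calc sint (∑ i, c i • (Measure.dirac (p i)).toSignedMeasure) f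
      = ∑ i, sint (c i • (Measure.dirac (p i)).toSignedMeasure) f :=
        map_sum (IsLinearMap.mk' (sint · f) ⟨(sint_add · · f), (sint_smul · · f)⟩) _ _
    _ = ∑ i, c i * f (p i) := by simp only [sint_smul, sint_toSignedMeasure,
          integral_dirac' _ _ f.continuous.stronglyMeasurable]

theorem sint_sum_smul {ι : Type*} [Fintype ι] (s : SignedMeasure Z) (c : ι → ℝ)
    (f : ι → Z →ᵇ ℝ) : sint s (⇑(∑ i, c i • f i)) = ∑ i, c i * sint s (f i) := by
  simp only [sint, coe_sum, coe_smul, Finset.sum_apply, smul_eq_mul]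
  rw [integral_finsetSum _ fun i _ => ((f i).integrable _).const_mul (c i),
    integral_finsetSum _ fun i _ => ((f i).integrable _).const_mul (c i),
    ← Finset.sum_sub_distrib]
  simp only [integral_const_mul, mul_sub]

theorem tendsto_integral_of_norm_le_of_tendsto (μ : Measure Z) [IsFiniteMeasure μ]
    {f : ℕ → Z →ᵇ ℝ} {g : Z →ᵇ ℝ} {C : ℝ} (hf : ∀ n, ‖f n‖ ≤ C)
    (hfg : ∀ z, Tendsto (fun n => f n z) atTop (𝓝 (g z))) :
    Tendsto (fun n => ∫ z, f n z ∂μ) atTop (𝓝 (∫ z, g z ∂μ)) :=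
  tendsto_integral_of_dominated_convergence (fun _ => C)
    (fun n => (f n).continuous.aestronglyMeasurable) (integrable_const C)
    (fun n => ae_of_all _ fun z => ((f n).norm_coe_le_norm z).trans (hf n)) (ae_of_all _ hfg)

theorem tendsto_sint_of_norm_le_of_tendsto (s : SignedMeasure Z)
    {f : ℕ → Z →ᵇ ℝ} {g : Z →ᵇ ℝ} {C : ℝ} (hf : ∀ n, ‖f n‖ ≤ C)
    (hfg : ∀ z, Tendsto (fun n => f n z) atTop (𝓝 (g z))) :
    Tendsto (fun n => sint s (f n)) atTop (𝓝 (sint s g)) :=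
  (tendsto_integral_of_norm_le_of_tendsto _ hf hfg).sub
    (tendsto_integral_of_norm_le_of_tendsto _ hf hfg)

end sint

section

variable {X : Type*} [MetricSpace X]

theorem exists_partitionOfUnity_fin_subordinate_ball {K : Set X} (hK : IsCompact K) {r : ℝ}
    (hr : 0 < r) : ∃ (m : ℕ) (p : Fin m → X) (ρ : PartitionOfUnity (Fin m) X K),
      ρ.IsSubordinate fun i => ball (p i) r := by
  obtain ⟨t, hcover⟩ := hK.elim_finite_subcover (fun q => ball q r) (fun _ => isOpen_ball)
    fun x _ => Set.mem_iUnion.2 ⟨x, mem_ball_self hr⟩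
  refine ⟨t.card, fun i => t.equivFin.symm i, ?_⟩
  refine PartitionOfUnity.exists_isSubordinate hK.isClosed _ (fun _ => isOpen_ball) ?_
  rwa [t.equivFin.symm.surjective.iUnion_comp (fun q : t => ball (q : X) r), Set.iUnion_subtype]

namespace PartitionOfUnity

variable {ι : Type*} {s : Set X} (ρ : PartitionOfUnity ι X s)

noncomputable def toBCF (i : ι) : X →ᵇ ℝ :=
  ofNormedAddCommGroup (ρ i) (ρ i).continuous 1 fun x => by
    rw [Real.norm_of_nonneg (ρ.nonneg i x)]
    exact ρ.le_one i x

@[simp]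
theorem toBCF_apply (i : ι) (x : X) : ρ.toBCF i x = ρ i x := rfl

variable [Fintype ι]

theorem norm_sum_smul_toBCF_le (c : ι → ℝ) {C : ℝ} (hC : 0 ≤ C) (hc : ∀ i, ‖c i‖ ≤ C) :
    ‖∑ i, c i • ρ.toBCF i‖ ≤ C := by
  refine norm_le hC |>.2 fun x => ?_
  simp only [coe_sum, coe_smul, Finset.sum_apply, toBCF_apply, smul_eq_mul]
  calc ‖∑ i, c i * ρ i x‖ ≤ ∑ i, ‖c i‖ * ρ i x := by
        refine (norm_sum_le _ _).trans (Finset.sum_le_sum fun i _ => ?_)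
        rw [norm_mul, Real.norm_of_nonneg (ρ.nonneg i x)]
    _ ≤ ∑ i, C * ρ i x :=
        Finset.sum_le_sum fun i _ => mul_le_mul_of_nonneg_right (hc i) (ρ.nonneg i x)
    _ ≤ C := by
        rw [← Finset.mul_sum, ← finsum_eq_sum_of_fintype]
        exact mul_le_of_le_one_right hC (ρ.sum_le_one x)

theorem dist_sum_mul_le {p : ι → X} {r : ℝ} (hρ : ρ.IsSubordinate fun i => ball (p i) r)
    {f : X → ℝ} {x : X} (hx : x ∈ s) {ε : ℝ} (hf : ∀ y, dist y x < r → dist (f y) (f x) ≤ ε) :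
    dist (∑ i, f (p i) * ρ i x) (f x) ≤ ε := by
  have hsum : ∑ i, ρ i x = 1 := by rw [← finsum_eq_sum_of_fintype, ρ.sum_eq_one hx]
  have hterm : ∀ i, |f (p i) - f x| * ρ i x ≤ ε * ρ i x := by
    intro i
    by_cases hi : ρ i x = 0
    · simp [hi]
    have hxi : x ∈ ball (p i) r := hρ i (subset_tsupport _ hi)
    exact mul_le_mul_of_nonneg_right (hf _ (by rwa [dist_comm])) (ρ.nonneg i x)
  calc dist (∑ i, f (p i) * ρ i x) (f x) = |∑ i, (f (p i) - f x) * ρ i x| := by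
        simp only [Real.dist_eq, sub_mul, Finset.sum_sub_distrib, ← Finset.mul_sum, hsum, mul_one]
    _ ≤ ∑ i, |f (p i) - f x| * ρ i x := by
        refine (Finset.abs_sum_le_sum_abs _ _).trans (Finset.sum_le_sum fun i _ => ?_)
        rw [abs_mul, abs_of_nonneg (ρ.nonneg i x)]
    _ ≤ ε := by
        rw [← mul_one ε, ← hsum, Finset.mul_sum]
        exact Finset.sum_le_sum fun i _ => hterm i

end PartitionOfUnity

theorem tendsto_sum_mul_partitionOfUnity {ι : ℕ → Type*} [∀ n, Fintype (ι n)] {K : ℕ → Set X}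
    {r : ℕ → ℝ} {p : ∀ n, ι n → X} (ρ : ∀ n, PartitionOfUnity (ι n) X (K n))
    (hρ : ∀ n, (ρ n).IsSubordinate fun i => ball (p n i) (r n)) (hr : Tendsto r atTop (𝓝 0))
    {f : X → ℝ} {x : X} (hf : ContinuousAt f x) (hK : ∀ᶠ n in atTop, x ∈ K n) :
    Tendsto (fun n => ∑ i, f (p n i) * ρ n i x) atTop (𝓝 (f x)) := by
  refine Metric.tendsto_nhds.2 fun ε hε => ?_
  obtain ⟨δ, hδ, hfδ⟩ := Metric.continuousAt_iff.1 hf (ε / 2) (half_pos hε)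
  filter_upwards [hK, hr.eventually (gt_mem_nhds hδ)] with n hxn hrn
  exact ((ρ n).dist_sum_mul_le (hρ n) hxn fun y hy => (hfδ (hy.trans hrn)).le).trans_lt
    (half_lt_self hε)

end

theorem eventually_mem_compactCovering (X : Type*) [TopologicalSpace X] [SigmaCompactSpace X]
    (x : X) : ∀ᶠ n in atTop, x ∈ compactCovering X n :=
  let ⟨N, hN⟩ := exists_mem_compactCovering x
  eventually_atTop.2 ⟨N, fun _ hn => compactCovering_subset X hn hN⟩

theorem tendsto_sint_sum_smul_dirac {X : Type*} [MetricSpace X] [MeasurableSpace X]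
    [OpensMeasurableSpace X] {ι : ℕ → Type*} [∀ n, Fintype (ι n)] {K : ℕ → Set X}
    {r : ℕ → ℝ} {p : ∀ n, ι n → X} (ρ : ∀ n, PartitionOfUnity (ι n) X (K n))
    (hρ : ∀ n, (ρ n).IsSubordinate fun i => ball (p n i) (r n)) (hr : Tendsto r atTop (𝓝 0))
    (hK : ∀ x, ∀ᶠ n in atTop, x ∈ K n) (s : SignedMeasure X) (f : X →ᵇ ℝ) :
    Tendsto
      (fun n => sint (∑ i, sint s ((ρ n).toBCF i) • (Measure.dirac (p n i)).toSignedMeasure) f)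
      atTop (𝓝 (sint s f)) := by
  have hsint : ∀ n, sint (∑ i, sint s ((ρ n).toBCF i) • (Measure.dirac (p n i)).toSignedMeasure) f
      = sint s (⇑(∑ i, f (p n i) • (ρ n).toBCF i)) := by
    intro n
    simp only [sint_sum_smul_dirac, sint_sum_smul, mul_comm]
  simp only [hsint]
  refine tendsto_sint_of_norm_le_of_tendsto s
    (fun n => (ρ n).norm_sum_smul_toBCF_le _ (norm_nonneg f) fun i => f.norm_coe_le_norm _)
    fun x => ?_
  simpa only [coe_sum, coe_smul, Finset.sum_apply, PartitionOfUnity.toBCF_apply, smul_eq_mul]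
    using tendsto_sum_mul_partitionOfUnity ρ hρ hr f.continuous.continuousAt (hK x)

theorem stmt14_general {X Y : Type*}
    [MetricSpace X] [TopologicalSpace.SeparableSpace X]
    [LocallyCompactSpace X] [MeasurableSpace X] [BorelSpace X]
    [MetricSpace Y] [MeasurableSpace Y]
    (Φ : SignedMeasure X → SignedMeasure Y)
    (hadd : ∀ s t : SignedMeasure X, Φ (s + t) = Φ s + Φ t)
    (hsmul : ∀ (r : ℝ) (s : SignedMeasure X), Φ (r • s) = r • Φ s)
    (hwc : ∀ (lams : ℕ → SignedMeasure X) (lam : SignedMeasure X),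
      (∀ f : BoundedContinuousFunction X ℝ,
        Tendsto (fun n => sint (lams n) f) atTop (nhds (sint lam f))) →
      ∀ g : BoundedContinuousFunction Y ℝ,
        Tendsto (fun n => sint (Φ (lams n)) g) atTop (nhds (sint (Φ lam) g))) :
    ∃ (m : ℕ → ℕ) (f : (n : ℕ) → Fin (m n) → BoundedContinuousFunction X ℝ)
      (ρ : (n : ℕ) → Fin (m n) → SignedMeasure Y),
      ∀ lam : SignedMeasure X, ∀ g : BoundedContinuousFunction Y ℝ,
        Tendsto (fun n => sint (∑ i, sint lam (f n i) • ρ n i) g) atTop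
          (nhds (sint (Φ lam) g)) := by
  choose m p ρ hρ using fun n : ℕ => exists_partitionOfUnity_fin_subordinate_ball
    (isCompact_compactCovering X n) (Nat.one_div_pos_of_nat (α := ℝ) (n := n))
  refine ⟨m, fun n => (ρ n).toBCF, fun n i => Φ (Measure.dirac (p n i)).toSignedMeasure,
    fun lam g => ?_⟩
  have hΦ : ∀ n, Φ (∑ i, sint lam ((ρ n).toBCF i) • (Measure.dirac (p n i)).toSignedMeasure)
      = ∑ i, sint lam ((ρ n).toBCF i) • Φ (Measure.dirac (p n i)).toSignedMeasure := fun n => by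
    simpa only [IsLinearMap.mk'_apply, hsmul] using map_sum (IsLinearMap.mk' Φ ⟨hadd, hsmul⟩)
      (fun i => sint lam ((ρ n).toBCF i) • (Measure.dirac (p n i)).toSignedMeasure) Finset.univ
  simpa only [hΦ] using hwc _ lam (tendsto_sint_sum_smul_dirac ρ hρ
    tendsto_one_div_add_atTop_nhds_zero_nat (eventually_mem_compactCovering X) lam) g

/-- On locally compact Polish spaces, every linear weakly continuous map `Φ`
between finite signed Borel measures is the weak limit of a sequence of simple
transfunctions `Φ_n λ = Σ_{i<m_n} (∫ f_{n,i} dλ) ρ_{n,i}`: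
for every `λ`, `Φ_n λ → Φλ` weakly. -/
theorem stmt14 {X Y : Type*}
    [MetricSpace X] [CompleteSpace X] [TopologicalSpace.SeparableSpace X]
    [LocallyCompactSpace X] [MeasurableSpace X] [BorelSpace X]
    [MetricSpace Y] [CompleteSpace Y] [TopologicalSpace.SeparableSpace Y]
    [LocallyCompactSpace Y] [MeasurableSpace Y] [BorelSpace Y]
    (Φ : SignedMeasure X → SignedMeasure Y)
    (hadd : ∀ s t : SignedMeasure X, Φ (s + t) = Φ s + Φ t)
    (hsmul : ∀ (r : ℝ) (s : SignedMeasure X), Φ (r • s) = r • Φ s)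
    (hwc : ∀ (lams : ℕ → SignedMeasure X) (lam : SignedMeasure X),
      (∀ f : BoundedContinuousFunction X ℝ,
        Tendsto (fun n => sint (lams n) f) atTop (nhds (sint lam f))) →
      ∀ g : BoundedContinuousFunction Y ℝ,
        Tendsto (fun n => sint (Φ (lams n)) g) atTop (nhds (sint (Φ lam) g))) :
    ∃ (m : ℕ → ℕ) (f : (n : ℕ) → Fin (m n) → BoundedContinuousFunction X ℝ)
      (ρ : (n : ℕ) → Fin (m n) → SignedMeasure Y),
      ∀ lam : SignedMeasure X, ∀ g : BoundedContinuousFunction Y ℝ,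
        Tendsto (fun n => sint (∑ i, sint lam (f n i) • ρ n i) g) atTop
          (nhds (sint (Φ lam) g)) :=
  stmt14_general Φ hadd hsmul hwc
end
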